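/- Every nonzero product of arrows in B(Z_2) is of the form ρ_i ρ_{i+1} ··· ρ_j with consecutive increasing indices: if (k_1, …, k_m) is a sequence of indices in {1,…,7} with m ≥ 2 such that the product ρ_{k_1} ρ_{k_2} ··· ρ_{k_m} is nonzero in B(Z_2), then k_{t+1} = k_t + 1 for all t. -/

import Mathlib

open FreeAlgebra

/-- Generators of the path algebra `B(Z_2)`: four vertex idempotents and seven arrows. -/
inductive Gen2 : Type
  | e : Fin 4 → Gen2
  | r : Fin 7 → Gen2

/-- Sources of the arrows ρ₁,…,ρ₇. -/
def src2 : Fin 7 → Fin 4 := ![0, 1, 0, 1, 2, 3, 2]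

/-- Targets of the arrows ρ₁,…,ρ₇. -/
def tgt2 : Fin 7 → Fin 4 := ![1, 0, 1, 2, 3, 2, 3]

/-- Relations presenting `B(Z_2)` as a quotient of the free algebra: the path-algebra
relations for the quiver together with ρ₁ρ₄ = ρ₄ρ₇ = ρ₂ρ₁ = ρ₃ρ₂ = ρ₆ρ₅ = ρ₇ρ₆ = 0. -/
inductive Rel2 : FreeAlgebra (ZMod 2) Gen2 → FreeAlgebra (ZMod 2) Gen2 → Prop
  | idem (k : Fin 4) :
      Rel2 (ι (ZMod 2) (Gen2.e k) * ι (ZMod 2) (Gen2.e k)) (ι (ZMod 2) (Gen2.e k))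
  | orth (k l : Fin 4) (h : k ≠ l) : Rel2 (ι (ZMod 2) (Gen2.e k) * ι (ZMod 2) (Gen2.e l)) 0
  | sum : Rel2 (∑ k : Fin 4, ι (ZMod 2) (Gen2.e k)) 1
  | source (m : Fin 7) :
      Rel2 (ι (ZMod 2) (Gen2.e (src2 m)) * ι (ZMod 2) (Gen2.r m)) (ι (ZMod 2) (Gen2.r m))
  | target (m : Fin 7) :
      Rel2 (ι (ZMod 2) (Gen2.r m) * ι (ZMod 2) (Gen2.e (tgt2 m))) (ι (ZMod 2) (Gen2.r m))
  | rel14 : Rel2 (ι (ZMod 2) (Gen2.r 0) * ι (ZMod 2) (Gen2.r 3)) 0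
  | rel47 : Rel2 (ι (ZMod 2) (Gen2.r 3) * ι (ZMod 2) (Gen2.r 6)) 0
  | rel21 : Rel2 (ι (ZMod 2) (Gen2.r 1) * ι (ZMod 2) (Gen2.r 0)) 0
  | rel32 : Rel2 (ι (ZMod 2) (Gen2.r 2) * ι (ZMod 2) (Gen2.r 1)) 0
  | rel65 : Rel2 (ι (ZMod 2) (Gen2.r 5) * ι (ZMod 2) (Gen2.r 4)) 0
  | rel76 : Rel2 (ι (ZMod 2) (Gen2.r 6) * ι (ZMod 2) (Gen2.r 5)) 0

/-- The genus-2 bordered algebra `B(Z_2)`. -/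
abbrev B2 : Type := RingQuot Rel2

/-- The idempotents i₀, i₁, i₂, i₃ in `B(Z_2)`. -/
noncomputable def idem2 (k : Fin 4) : B2 :=
  RingQuot.mkAlgHom (ZMod 2) Rel2 (ι (ZMod 2) (Gen2.e k))

/-- The arrows ρ₁,…,ρ₇ in `B(Z_2)` (indexed by `Fin 7`). -/
noncomputable def arr2 (m : Fin 7) : B2 :=
  RingQuot.mkAlgHom (ZMod 2) Rel2 (ι (ZMod 2) (Gen2.r m))

/-- The arrow ρ_k in `B(Z_2)`, using 1-based indexing; `0` for out-of-range indices. -/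
noncomputable def ρ2 (k : ℕ) : B2 :=
  if h : 1 ≤ k ∧ k ≤ 7 then arr2 ⟨k - 1, by omega⟩ else 0

/-- The chord ρ_{[i,j]} = ρ_i ρ_{i+1} ⋯ ρ_j in `B(Z_2)` (1-based indices). -/
noncomputable def chord2 (i j : ℕ) : B2 :=
  ((List.range' i (j + 1 - i)).map ρ2).prod

/-!
A product of two arrows ρ_a ρ_b with b ≠ a + 1 vanishes in `B(Z_2)`: either the arrows are not
composable, so the product passes through a product of two distinct orthogonal idempotents, or
they are composable, and then a check of the quiver shows that (a, b) is one of the six defining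
relations. Hence in a nonzero product every pair of adjacent factors is consecutive.
-/

theorem List.isChain_of_prod_map_ne_zero {α M : Type*} [MonoidWithZero M] {f : α → M}
    {R : α → α → Prop} (h : ∀ a b, ¬R a b → f a * f b = 0) :
    ∀ {l : List α}, (l.map f).prod ≠ 0 → l.IsChain R
  | [], _ => .nil
  | [_], _ => .singleton _
  | a :: b :: l, hl => by
    rw [List.map_cons, List.prod_cons] at hl
    refine .cons_cons ?_ (isChain_of_prod_map_ne_zero h (right_ne_zero_of_mul hl))
    by_contra hab
    rw [List.map_cons, List.prod_cons, ← mul_assoc, h a b hab, zero_mul] at hl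
    exact hl rfl

lemma arr2_mul_idem2_tgt2 (m : Fin 7) : arr2 m * idem2 (tgt2 m) = arr2 m := by
  simpa [arr2, idem2] using RingQuot.mkAlgHom_rel (ZMod 2) (Rel2.target m)

lemma idem2_src2_mul_arr2 (m : Fin 7) : idem2 (src2 m) * arr2 m = arr2 m := by
  simpa [arr2, idem2] using RingQuot.mkAlgHom_rel (ZMod 2) (Rel2.source m)

lemma idem2_mul_idem2_of_ne {k l : Fin 4} (h : k ≠ l) : idem2 k * idem2 l = 0 := by
  simpa [idem2] using RingQuot.mkAlgHom_rel (ZMod 2) (Rel2.orth k l h)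

lemma arr2_mul_arr2_of_tgt2_ne_src2 {a b : Fin 7} (h : tgt2 a ≠ src2 b) :
    arr2 a * arr2 b = 0 := by
  rw [← arr2_mul_idem2_tgt2 a, ← idem2_src2_mul_arr2 b, mul_assoc, ← mul_assoc (idem2 _),
    idem2_mul_idem2_of_ne h, zero_mul, mul_zero]

lemma arr2_mul_arr2_of_rel {a b : Fin 7}
    (h : Rel2 (ι (ZMod 2) (Gen2.r a) * ι (ZMod 2) (Gen2.r b)) 0) : arr2 a * arr2 b = 0 := by
  simpa [arr2] using RingQuot.mkAlgHom_rel (ZMod 2) h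

lemma arr2_mul_arr2_eq_zero {a b : Fin 7} (h : (b : ℕ) ≠ a + 1) : arr2 a * arr2 b = 0 := by
  fin_cases a <;> fin_cases b <;>
    first
      | exact absurd rfl h
      | exact arr2_mul_arr2_of_tgt2_ne_src2 (by decide)
      | exact arr2_mul_arr2_of_rel Rel2.rel14
      | exact arr2_mul_arr2_of_rel Rel2.rel47
      | exact arr2_mul_arr2_of_rel Rel2.rel21
      | exact arr2_mul_arr2_of_rel Rel2.rel32
      | exact arr2_mul_arr2_of_rel Rel2.rel65
      | exact arr2_mul_arr2_of_rel Rel2.rel76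

lemma ρ2_mul_ρ2_eq_zero {a b : ℕ} (h : b ≠ a + 1) : ρ2 a * ρ2 b = 0 := by
  unfold ρ2
  split_ifs with ha hb
  · exact arr2_mul_arr2_eq_zero (show b - 1 ≠ a - 1 + 1 by omega)
  all_goals simp only [mul_zero, zero_mul]

theorem stmt_15_general (ks : List ℕ)
    (hne : (ks.map ρ2).prod ≠ 0) :
    ks.Chain' (fun a b => b = a + 1) :=
  List.isChain_of_prod_map_ne_zero (fun _ _ h => ρ2_mul_ρ2_eq_zero h) hne

/-- every nonzero product of at least two arrows in B(Z_2) has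
consecutive increasing indices. -/
theorem stmt_15 (ks : List ℕ) (hlen : 2 ≤ ks.length)
    (hmem : ∀ k ∈ ks, 1 ≤ k ∧ k ≤ 7)
    (hne : (ks.map ρ2).prod ≠ 0) :
    ks.Chain' (fun a b => b = a + 1) :=
  stmt_15_general ks hne
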